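/- arXiv:2110.03648 — 2 statements merged into one kernel-verified Lean document; each statement's English description precedes it below -/
import Mathlib

section
/- Let μ be an uncountable regular cardinal and let S ⊆ {α < μ : cf(α) = ω} be stationary in μ. Then S can be partitioned into μ pairwise disjoint stationary subsets; in particular, there exist μ pairwise disjoint stationary subsets of S. -/
/-- `C` is closed and unbounded in `μ`. -/
def IsClubIn (C : Set Ordinal) (μ : Ordinal) : Prop :=
  (∀ x ∈ C, x < μ) ∧
  (∀ a < μ, ∃ x ∈ C, a ≤ x) ∧
  (∀ a < μ, Order.IsSuccLimit a → (∀ b < a, ∃ x ∈ C, b ≤ x ∧ x < a) → a ∈ C)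

/-- `S` is stationary in `μ`: it meets every club of `μ`. -/
def IsStationaryIn (S : Set Ordinal) (μ : Ordinal) : Prop :=
  ∀ C : Set Ordinal, IsClubIn C μ → (S ∩ C).Nonempty

/-!
Fix a ladder `L α : ℕ → α` cofinal in each `α ∈ S`. If for every `n` some threshold `i n` made
`{α ∈ S | i n ≤ L α n}` nonstationary, then a point of `S` above `⨆ n, i n` lying in all the
witnessing clubs would have a ladder that never reaches `⨆ n, i n`, which is absurd. So for some
`n` all the sets `{α ∈ S | i ≤ L α n}` are stationary, and Fodor's lemma applied to the
regressive map `α ↦ L α n` on each of them gives cofinally many, hence `μ` many, values whose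
fibres are stationary. These disjoint fibres, with the rest of `S` thrown into one of them,
partition `S`.
-/

open Cardinal Ordinal Order Set

universe u

theorem isClubIn_Iio (ν : Ordinal) : IsClubIn (Iio ν) ν :=
  ⟨fun _ h => h, fun a ha => ⟨a, ha, le_rfl⟩, fun _ ha _ _ => ha⟩

theorem isClubIn_Ioo {j ν : Ordinal} (hν : IsSuccLimit ν) (hj : j < ν) :
    IsClubIn (Ioo j ν) ν := by
  refine ⟨fun x hx => hx.2, fun a ha => ?_, fun a ha hlim h => ?_⟩
  · exact ⟨max a (succ j), ⟨(lt_succ j).trans_le (le_max_right _ _),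
      max_lt ha (hν.succ_lt hj)⟩, le_max_left _ _⟩
  · obtain ⟨x, hx, -, hxa⟩ := h 0 hlim.bot_lt
    exact ⟨hx.1.trans hxa, ha⟩

theorem IsStationaryIn.mono {S T : Set Ordinal} {ν : Ordinal} (hST : S ⊆ T)
    (hS : IsStationaryIn S ν) : IsStationaryIn T ν :=
  fun C hC => (hS C hC).mono (inter_subset_inter_left C hST)

theorem IsStationaryIn.exists_mem_lt {S : Set Ordinal} {ν : Ordinal}
    (hS : IsStationaryIn S ν) : ∃ α ∈ S, α < ν :=
  hS _ (isClubIn_Iio ν)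

theorem IsClubIn.exists_selector {C : Set Ordinal} {ν : Ordinal} (hC : IsClubIn C ν) :
    ∃ c : Ordinal → Ordinal, ∀ β < ν, c β ∈ C ∧ β ≤ c β := by
  have : ∀ β, ∃ x, β < ν → x ∈ C ∧ β ≤ x := fun β =>
    if hβ : β < ν then (hC.2.1 β hβ).imp fun _ hx _ => hx else ⟨0, fun h => absurd h hβ⟩
  exact Classical.skolem.mp this

section Regular

variable {μ : Cardinal.{u}}

theorem iSup_Iio_lt_ord (hμ : μ.IsRegular) {β : Ordinal.{u}} (hβ : β < μ.ord)
    {f : Iio β → Ordinal.{u}} (hf : ∀ i, f i < μ.ord) : ⨆ i, f i < μ.ord :=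
  lift_iSup_lt_of_lt_cof (by rwa [← lift_cof, hμ.cof_ord, Cardinal.mk_Iio_ordinal,
    Cardinal.lift_lift, Cardinal.lift_lt, ← lt_ord]) hf

theorem iSup_lt_ord_of_countable (hμ : μ.IsRegular) (hunc : ℵ₀ < μ) {ι : Type*} [Countable ι]
    {f : ι → Ordinal.{u}} (hf : ∀ i, f i < μ.ord) : ⨆ i, f i < μ.ord :=
  lift_iSup_lt_of_lt_cof (by
    rw [← lift_cof, hμ.cof_ord]
    exact (Cardinal.lift_le_aleph0.mpr Cardinal.mk_le_aleph0).trans_lt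
      (Cardinal.aleph0_lt_lift.mpr hunc)) hf

theorem exists_closurePoint (hμ : μ.IsRegular) (hunc : ℵ₀ < μ) {f : Ordinal.{u} → Ordinal.{u}}
    (hf : ∀ β < μ.ord, f β < μ.ord) {a : Ordinal.{u}} (ha : a < μ.ord) :
    ∃ s, a < s ∧ s < μ.ord ∧ IsSuccLimit s ∧ ∀ β < s, f β < s := by
  have hν := isSuccLimit_ord hunc.le
  set g : Ordinal → Ordinal := fun β => succ (max β (⨆ δ : Iio (succ β), f δ))
  have hg : ∀ β < μ.ord, g β < μ.ord := fun β hβ =>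
    hν.succ_lt <| max_lt hβ <| iSup_Iio_lt_ord hμ (hν.succ_lt hβ) fun δ =>
      hf δ ((lt_succ_iff.mp δ.2).trans_lt hβ)
  -- `g` is not normal: `nfp g a` is used only as `⨆ n, g^[n] a`.
  have hlt_g : ∀ β, β < g β := fun β => (le_max_left _ _).trans_lt (lt_succ _)
  have hstep : ∀ β < nfp g a, succ β < nfp g a ∧ f β < nfp g a := by
    intro β hβ
    obtain ⟨n, hn⟩ := lt_nfp_iff.mp hβ
    have hgn : g (g^[n] a) ≤ nfp g a := by
      rw [← Function.iterate_succ_apply' g n a]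
      exact iterate_le_nfp g a (n + 1)
    have hfβ : f β < g (g^[n] a) :=
      (Ordinal.le_iSup (fun δ : Iio (succ (g^[n] a)) => f δ) ⟨β, lt_succ_of_le hn.le⟩).trans_lt
        ((le_max_right _ _).trans_lt (lt_succ _))
    exact ⟨(succ_le_of_lt hn).trans_lt ((hlt_g _).trans_le hgn), hfβ.trans_le hgn⟩
  have has : a < nfp g a := (hlt_g a).trans_le (iterate_le_nfp g a 1)
  refine ⟨nfp g a, has, nfp_lt_ord (by rwa [hμ.cof_ord]) hg ha, ?_, fun β hβ => (hstep β hβ).2⟩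
  exact isSuccLimit_iff.mpr ⟨has.ne_bot, isSuccPrelimit_of_succ_lt fun β hβ => (hstep β hβ).1⟩

theorem isClubIn_iInter (hμ : μ.IsRegular) (hunc : ℵ₀ < μ) {ι : Type*} [Countable ι]
    [Nonempty ι] {C : ι → Set Ordinal.{u}} (hC : ∀ i, IsClubIn (C i) μ.ord) :
    IsClubIn (⋂ i, C i) μ.ord := by
  refine ⟨fun x hx => (hC (Classical.arbitrary ι)).1 x (mem_iInter.mp hx _), fun a ha => ?_,
    fun a ha hlim h => mem_iInter.mpr fun i => (hC i).2.2 a ha hlim fun b hb => ?_⟩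
  · choose c hc using fun i => (hC i).exists_selector
    obtain ⟨s, has, hs, hlim, hcl⟩ := exists_closurePoint hμ hunc (f := fun β => ⨆ i, c i β)
      (fun β hβ => iSup_lt_ord_of_countable hμ hunc fun i => (hC i).1 _ (hc i β hβ).1) ha
    refine ⟨s, mem_iInter.mpr fun i => (hC i).2.2 s hs hlim fun b hb => ?_, has.le⟩
    obtain ⟨hmem, hle⟩ := hc i b (hb.trans hs)
    exact ⟨c i b, hmem, hle, (Ordinal.le_iSup (fun i => c i b) i).trans_lt (hcl b hb)⟩
  · obtain ⟨x, hx, hbx, hxa⟩ := h b hb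
    exact ⟨x, mem_iInter.mp hx i, hbx, hxa⟩

theorem isClubIn_diagInter (hμ : μ.IsRegular) (hunc : ℵ₀ < μ)
    {C : Ordinal.{u} → Set Ordinal.{u}} (hC : ∀ γ < μ.ord, IsClubIn (C γ) μ.ord) :
    IsClubIn {a | a < μ.ord ∧ ∀ γ < a, a ∈ C γ} μ.ord := by
  have hν := isSuccLimit_ord hunc.le
  refine ⟨fun x hx => hx.1, fun a ha => ?_, fun a ha hlim h => ⟨ha, fun γ hγ => ?_⟩⟩
  · have hsel : ∀ γ, ∃ c : Ordinal → Ordinal, γ < μ.ord → ∀ β < μ.ord, c β ∈ C γ ∧ β ≤ c β :=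
      fun γ => if hγ : γ < μ.ord then ((hC γ hγ).exists_selector).imp fun _ h _ => h
        else ⟨id, fun h => absurd h hγ⟩
    choose c hc using hsel
    obtain ⟨s, has, hs, hlim, hcl⟩ := exists_closurePoint hμ hunc
      (f := fun β => ⨆ γ : Iio (succ β), c γ β)
      (fun β hβ => iSup_Iio_lt_ord hμ (hν.succ_lt hβ) fun γ =>
        have hγ := (lt_succ_iff.mp γ.2).trans_lt hβ
        (hC γ hγ).1 _ (hc γ hγ β hβ).1) ha
    refine ⟨s, ⟨hs, fun γ hγ => (hC γ (hγ.trans hs)).2.2 s hs hlim fun b hb => ?_⟩, has.le⟩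
    have hγb : max γ b < s := max_lt hγ hb
    obtain ⟨hmem, hle⟩ := hc γ (hγ.trans hs) (max γ b) (hγb.trans hs)
    refine ⟨c γ (max γ b), hmem, (le_max_right _ _).trans hle, lt_of_le_of_lt ?_ (hcl _ hγb)⟩
    exact Ordinal.le_iSup (fun δ : Iio (succ (max γ b)) => c δ (max γ b))
      ⟨γ, lt_succ_of_le (le_max_left γ b)⟩
  · refine (hC γ (hγ.trans ha)).2.2 a ha hlim fun b hb => ?_
    obtain ⟨x, hx, hbx, hxa⟩ := h (max b (succ γ)) (max_lt hb (hlim.succ_lt hγ))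
    exact ⟨x, hx.2 γ (succ_le_iff.mp ((le_max_right _ _).trans hbx)),
      (le_max_left _ _).trans hbx, hxa⟩

theorem fodor (hμ : μ.IsRegular) (hunc : ℵ₀ < μ) {S : Set Ordinal.{u}}
    {g : Ordinal.{u} → Ordinal.{u}} (hS : IsStationaryIn S μ.ord) (hg : ∀ α ∈ S, g α < α) :
    ∃ γ, IsStationaryIn {α | α ∈ S ∧ g α = γ} μ.ord := by
  by_contra! h
  simp only [IsStationaryIn, not_forall] at h
  choose D hD hempty using h
  obtain ⟨α, hαS, -, hαD⟩ := hS _ (isClubIn_diagInter hμ hunc fun γ _ => hD γ)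
  exact hempty (g α) ⟨α, ⟨hαS, rfl⟩, hαD (g α) (hg α hαS)⟩

theorem exists_forall_isStationaryIn_le_ladder (hμ : μ.IsRegular) (hunc : ℵ₀ < μ)
    {S : Set Ordinal.{u}} (hS : IsStationaryIn S μ.ord) {L : Ordinal.{u} → ℕ → Ordinal.{u}}
    (hL : ∀ α ∈ S, ∀ b < α, ∃ n, b ≤ L α n) :
    ∃ n, ∀ i < μ.ord, IsStationaryIn {α | α ∈ S ∧ i ≤ L α n} μ.ord := by
  by_contra! h
  simp only [IsStationaryIn, not_forall] at h
  choose i hi D hD hempty using h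
  have hj : ⨆ n, i n < μ.ord := iSup_lt_ord_of_countable hμ hunc hi
  have hE : ∀ o : Option ℕ, IsClubIn (o.elim (Ioo (⨆ n, i n) μ.ord) D) μ.ord := by
    rintro (_ | n)
    exacts [isClubIn_Ioo (isSuccLimit_ord hunc.le) hj, hD n]
  obtain ⟨α, hαS, hαE⟩ := hS _ (isClubIn_iInter hμ hunc hE)
  obtain ⟨n, hn⟩ := hL α hαS _ (mem_iInter.mp hαE none).1
  exact hempty n ⟨α, ⟨hαS, (Ordinal.le_iSup i n).trans hn⟩, mem_iInter.mp hαE (some n)⟩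

theorem exists_le_isStationaryIn_fiber (hμ : μ.IsRegular) (hunc : ℵ₀ < μ)
    {S : Set Ordinal.{u}} {g : Ordinal.{u} → Ordinal.{u}} (hg : ∀ α ∈ S, g α < α)
    {i : Ordinal.{u}} (hi : IsStationaryIn {α | α ∈ S ∧ i ≤ g α} μ.ord) :
    ∃ γ, i ≤ γ ∧ γ < μ.ord ∧ IsStationaryIn {α | α ∈ S ∧ g α = γ} μ.ord := by
  obtain ⟨γ, hγ⟩ := fodor hμ hunc hi fun α hα => hg α hα.1
  obtain ⟨α, ⟨⟨hαS, hiα⟩, rfl⟩, hαν⟩ := hγ.exists_mem_lt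
  exact ⟨g α, hiα, (hg α hαS).trans hαν, hγ.mono fun β hβ => ⟨hβ.1.1, hβ.2⟩⟩

theorem exists_injOn_of_unbounded (hμ : μ.IsRegular) {G : Set Ordinal.{u}}
    (hG : ∀ i < μ.ord, ∃ γ ∈ G, i ≤ γ ∧ γ < μ.ord) :
    ∃ e : Ordinal.{u} → Ordinal.{u}, MapsTo e (Iio μ.ord) G ∧ InjOn e (Iio μ.ord) := by
  have hcofinal : IsCofinal {x : Iio μ.ord | x.1 ∈ G} := fun x => by
    obtain ⟨γ, hγG, hxγ, hγ⟩ := hG x.1 x.2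
    exact ⟨⟨γ, hγ⟩, hγG, hxγ⟩
  have hcard : #(Iio μ.ord) ≤ #{x : Iio μ.ord | x.1 ∈ G} := by
    have := Order.cof_le hcofinal
    rw [cof_Iio, ← lift_cof, hμ.cof_ord] at this
    rwa [Cardinal.mk_Iio_ordinal, card_ord]
  obtain ⟨f⟩ := (Cardinal.le_def _ _).mp hcard
  refine ⟨fun i => if h : i ∈ Iio μ.ord then (f ⟨i, h⟩).1.1 else 0, fun i hi => ?_,
    fun i hi j hj hij => ?_⟩
  · dsimp only
    rw [dif_pos hi]
    exact (f ⟨i, hi⟩).2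
  · dsimp only at hij
    rw [dif_pos hi, dif_pos hj] at hij
    exact congrArg Subtype.val (f.injective (Subtype.ext (Subtype.ext hij)))

end Regular

theorem exists_ladderSystem : ∃ L : Ordinal.{u} → ℕ → Ordinal.{u},
    ∀ α, α.cof = ℵ₀ → (∀ n, L α n < α) ∧ ∀ b < α, ∃ n, b ≤ L α n := by
  have hladder : ∀ α : Ordinal.{u}, ∃ L : ℕ → Ordinal.{u},
      α.cof = ℵ₀ → (∀ n, L n < α) ∧ ∀ b < α, ∃ n, b ≤ L n := by
    intro α
    obtain ⟨f, hf⟩ := exists_isFundamentalSeq (o := α) rfl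
    refine ⟨fun n => if h : (n : Ordinal) ∈ Iio α.cof.ord then f ⟨n, h⟩ else 0, fun hα => ?_⟩
    have hω : α.cof.ord = ω := by rw [hα, ord_aleph0]
    have hn : ∀ n : ℕ, (n : Ordinal) ∈ Iio α.cof.ord := fun n => hω ▸ natCast_lt_omega0 n
    refine ⟨fun n => by simp only [dif_pos (hn n)]; exact (f _).2, fun b hb => ?_⟩
    obtain ⟨_, ⟨k, rfl⟩, hk⟩ := hf.isCofinal_range ⟨b, hb⟩
    obtain ⟨n, hkn⟩ := lt_omega0.mp (show k.1 < ω from hω ▸ k.2)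
    refine ⟨n, ?_⟩
    dsimp only
    rw [dif_pos (hn n), show (⟨n, hn n⟩ : Iio α.cof.ord) = k from Subtype.ext hkn.symm]
    exact hk
  choose L hL using hladder
  exact ⟨L, hL⟩

theorem exists_partition_of_pairwise_disjoint {ν : Ordinal} (hν : 0 < ν) {S : Set Ordinal}
    {A : Ordinal → Set Ordinal} (hAS : ∀ i < ν, A i ⊆ S) (hA : ∀ i < ν, IsStationaryIn (A i) ν)
    (hdisj : ∀ i < ν, ∀ j < ν, i ≠ j → Disjoint (A i) (A j)) :
    ∃ T : Ordinal → Set Ordinal,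
      (∀ i < ν, T i ⊆ S ∧ IsStationaryIn (T i) ν) ∧
      (∀ i < ν, ∀ j < ν, i ≠ j → Disjoint (T i) (T j)) ∧
      (⋃ i ∈ Iio ν, T i) = S := by
  set R := S \ ⋃ j ∈ Ioo 0 ν, A j
  have hR : ∀ j < ν, j ≠ 0 → Disjoint R (A j) := fun j hj hj0 =>
    disjoint_sdiff_left.mono_right
      (subset_biUnion_of_mem (u := A) (show j ∈ Ioo 0 ν from ⟨pos_iff_ne_zero.mpr hj0, hj⟩))
  have hAR : A 0 ⊆ R := fun α hα => ⟨hAS 0 hν hα, by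
    simp only [mem_iUnion, not_exists]
    exact fun j hj hαj => (hdisj 0 hν j hj.2 hj.1.ne).ne_of_mem hα hαj rfl⟩
  have hT : ∀ i < ν,
      Function.update A 0 R i ⊆ S ∧ IsStationaryIn (Function.update A 0 R i) ν := by
    intro i hi
    rcases eq_or_ne i 0 with rfl | hi0
    · simpa using ⟨sdiff_subset, (hA 0 hν).mono hAR⟩
    · simpa [hi0] using ⟨hAS i hi, hA i hi⟩
  refine ⟨Function.update A 0 R, hT, fun i hi j hj hij => ?_, ?_⟩
  · rcases eq_or_ne i 0 with rfl | hi0 <;> rcases eq_or_ne j 0 with rfl | hj0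
    · exact absurd rfl hij
    · simpa [hj0] using hR j hj hj0
    · simpa [hi0] using (hR i hi hi0).symm
    · simpa [hi0, hj0] using hdisj i hi j hj hij
  · refine subset_antisymm (iUnion₂_subset fun i hi => (hT i hi).1) fun α hα => ?_
    simp only [mem_iUnion, mem_Iio]
    by_cases h : ∃ j ∈ Ioo 0 ν, α ∈ A j
    · obtain ⟨j, hj, hαj⟩ := h
      exact ⟨j, hj.2, by simpa [hj.1.ne'] using hαj⟩
    · exact ⟨0, hν, by simpa [R] using ⟨hα, by simpa using h⟩⟩

/-- **Solovay's splitting theorem.** Let `μ` be an uncountable regular cardinal and let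
`S ⊆ {α < μ : cf α = ω}` be stationary in `μ`. Then `S` can be partitioned into `μ`
pairwise disjoint stationary subsets. -/
theorem solovay_splitting (μ : Cardinal) (hreg : μ.IsRegular)
    (hunc : Cardinal.aleph0 < μ)
    (S : Set Ordinal)
    (hSsub : ∀ α ∈ S, α < μ.ord ∧ Ordinal.cof α = Cardinal.aleph0)
    (hstat : IsStationaryIn S μ.ord) :
    ∃ T : Ordinal → Set Ordinal,
      (∀ i < μ.ord, T i ⊆ S ∧ IsStationaryIn (T i) μ.ord) ∧
      (∀ i < μ.ord, ∀ j < μ.ord, i ≠ j → Disjoint (T i) (T j)) ∧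
      (⋃ i ∈ Set.Iio μ.ord, T i) = S := by
  obtain ⟨L, hL⟩ := exists_ladderSystem
  obtain ⟨n, hn⟩ := exists_forall_isStationaryIn_le_ladder hreg hunc hstat fun α hα =>
    (hL α (hSsub α hα).2).2
  have hregressive : ∀ α ∈ S, L α n < α := fun α hα => (hL α (hSsub α hα).2).1 n
  obtain ⟨e, he, hinj⟩ := exists_injOn_of_unbounded hreg
    (G := {γ | IsStationaryIn {α | α ∈ S ∧ L α n = γ} μ.ord}) fun i hi =>
      (exists_le_isStationaryIn_fiber hreg hunc hregressive (hn i hi)).imp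
        fun _ ⟨hiγ, hγ, hfiber⟩ => ⟨hfiber, hiγ, hγ⟩
  exact exists_partition_of_pairwise_disjoint hreg.ord_pos (fun _ _ _ hα => hα.1)
    (fun i hi => he hi) fun i hi j hj hij => disjoint_left.mpr fun α hαi hαj =>
      hij (hinj hi hj (hαi.2.symm.trans hαj.2))
end

section
/- Let T be a tree of height λ (λ regular uncountable) in Π_{α<λ}κ_α in which every strictly increasing sequence of nodes has at most one limit node, and let ⟨𝒜_ξ : ξ < ζ⟩ (ζ < λ) be subtrees of T. Suppose for some node t̄ ∈ T: for every t ⊒ t̄ in T and every ξ < ζ, the tree T↾t is not contained in 𝒜_ξ, but above every node there is a node lying in some 𝒜_ξ, and above every node there is, for each ξ, a node outside 𝒜_ξ. Then there is a strictly increasing sequence ⟨s_i : i < ζ⟩ of nodes of T such that each s_i lies in some 𝒜_{ξ(i)} with ξ(i) < ζ but s_i ∉ 𝒜_{ξ(j)} for all j < i; consequently, letting s = ⋃_i s_i, every node t ⊒ s in T↾s lies in no 𝒜_ξ for ξ < ζ. -/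
/-- A node of a tree of sequences of ordinals: a length together with a value
function that is zero at and above the length. -/
structure PNode : Type 1 where
  len : Ordinal.{0}
  val : Ordinal.{0} → Ordinal.{0}
  zero_above : ∀ β, len ≤ β → val β = 0

namespace PNode

/-- The tree (extension) order on nodes. -/
def le (s t : PNode) : Prop := s.len ≤ t.len ∧ ∀ β < s.len, s.val β = t.val β

/-- Restriction of a node to length `α`. -/
noncomputable def restrict (t : PNode) (α : Ordinal) : PNode where
  len := min α t.len
  val := fun β => if β < min α t.len then t.val β else 0
  zero_above := by intro β h; simp [not_lt.mpr h]

/-- Extension of a node by one more value `β`. -/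
noncomputable def extend (t : PNode) (β : Ordinal) : PNode where
  len := t.len + 1
  val := fun γ => if γ < t.len then t.val γ else if γ = t.len then β else 0
  zero_above := by
    intro γ h
    have h1 : t.len < γ := by
      refine lt_of_lt_of_le ?_ h
      rw [Ordinal.add_one_eq_succ]; exact Order.lt_succ _
    simp [not_lt.mpr h1.le, h1.ne']

end PNode

/-- A tree: a nonempty set of nodes closed under restriction. -/
def IsTree (T : Set PNode) : Prop :=
  T.Nonempty ∧ ∀ t ∈ T, ∀ α, t.restrict α ∈ T

/-- The set of ordinals `β` such that `t⌢⟨β⟩` belongs to `T` (the ordinal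
successor set of `t`). -/
def OSucc (T : Set PNode) (t : PNode) : Set Ordinal := {β | t.extend β ∈ T}

/-- The node `t` lies in the product `Π_{β < len t} κ β`. -/
def InProd (κ : Ordinal.{0} → Cardinal.{0}) (t : PNode) : Prop :=
  ∀ β < t.len, t.val β < (κ β).ord

/-- The set of branches of `T` of length `α`: nodes of length `α` all of whose
proper restrictions lie in `T`. -/
def Br (T : Set PNode) (α : Ordinal) : Set PNode :=
  {b | b.len = α ∧ ∀ β < α, b.restrict β ∈ T}

/-- `T` is ever-branching (w.r.t. the cardinals `κ α`, `α < δ`). -/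
def EverBranching (κ : Ordinal.{0} → Cardinal.{0}) (T : Set PNode) (δ : Ordinal) : Prop :=
  ∀ α < δ, ∀ s ∈ T, ∃ t ∈ T, s.le t ∧ Cardinal.lift.{1,0} (κ α) ≤ Cardinal.mk (OSucc T t)

/-- `T` has no branch of length `< δ`: every branch of length `< δ` has a
proper extension in `T`. -/
def NoShortBranch (T : Set PNode) (δ : Ordinal) : Prop :=
  ∀ b : PNode, b.len < δ → (∀ β < b.len, b.restrict β ∈ T) →
    ∃ s ∈ T, b.le s ∧ b.len < s.len

/-- A perfect tree of height `δ`: a tree, `<δ`-closed (no short branches) and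
ever-branching. -/
def PerfectTree (κ : Ordinal.{0} → Cardinal.{0}) (T : Set PNode) (δ : Ordinal) : Prop :=
  IsTree T ∧ NoShortBranch T δ ∧ EverBranching κ T δ

/-!
Build a transfinite sequence of base nodes `t i`, `i ≤ ζ`, in `T` above `t̄`. At `t i` let `ξ i`
be the least index such that `t i` has a proper extension `s i` in `𝒜 (ξ i)`, and let `u i ⊒ s i`
be a node of `T` outside `𝒜 (ξ i)`; the next base node is any node above all earlier `u j`,
which exists because `T` has no short branches and `λ` is regular. Since the `𝒜 ξ` are closed
downwards, every node above `u j` is outside `𝒜 (ξ j)`; together with minimality this makes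
`i ↦ ξ i` strictly increasing, so `i ≤ ξ i`. If some `t ⊒ t ζ` were in `𝒜 ξ`, minimality at
stage `ξ` would give `ξ ξ ≤ ξ`, hence `ξ ξ = ξ`, while `t ⊒ u ξ` lies outside `𝒜 (ξ ξ)`.
-/

open Set

theorem StrictMonoOn.le_apply_of_Iic {α : Type*} [LinearOrder α] [WellFoundedLT α]
    {f : α → α} {a : α} (hf : StrictMonoOn f (Iic a)) {i : α} (hi : i ≤ a) : i ≤ f i := by
  induction i using WellFoundedLT.induction with
  | _ i ih =>
    by_contra! hlt
    have hfi : f i ≤ a := hlt.le.trans hi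
    exact (ih (f i) hlt hfi).not_gt (hf hfi hi hlt)

theorem exists_seq_of_forall_exists {ι α : Type*} [Preorder ι] [WellFoundedLT ι] [Nonempty α]
    (P : (ι → α) → ι → α → Prop)
    (hP : ∀ f g i x, (∀ j < i, f j = g j) → P f i x → P g i x)
    (ζ : ι) (hstep : ∀ f i, i ≤ ζ → (∀ j < i, P f j (f j)) → ∃ x, P f i x) :
    ∃ f : ι → α, ∀ i ≤ ζ, P f i (f i) := by
  classical
  let below (i : ι) (prev : ∀ j < i, α) : ι → α := fun j =>
    if h : j < i then prev j h else Classical.arbitrary α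
  let f : ι → α := wellFounded_lt.fix fun i prev => Classical.epsilon (P (below i prev) i)
  refine ⟨f, fun i => ?_⟩
  induction i using WellFoundedLT.induction with
  | _ i ih =>
    intro hi
    have hbelow : ∀ j < i, below i (fun j _ => f j) j = f j := fun j hj => dif_pos hj
    have hfi : f i = Classical.epsilon (P (below i fun j _ => f j) i) :=
      wellFounded_lt.fix_eq _ i
    obtain ⟨x, hx⟩ := hstep f i hi fun j hj => ih j hj (hj.le.trans hi)
    refine hP _ _ _ _ hbelow ?_
    rw [hfi]
    exact Classical.epsilon_spec ⟨x, hP _ _ _ _ (fun j hj => (hbelow j hj).symm) hx⟩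

namespace PNode

protected theorem ext {s t : PNode} (hlen : s.len = t.len) (hval : ∀ β, s.val β = t.val β) :
    s = t := by
  obtain ⟨l, v, _⟩ := s
  obtain ⟨l', v', _⟩ := t
  obtain rfl : l = l' := hlen
  obtain rfl : v = v' := funext hval
  rfl

instance : Inhabited PNode := ⟨⟨0, fun _ => 0, fun _ _ => rfl⟩⟩

instance : PartialOrder PNode where
  le := PNode.le
  le_refl _ := ⟨le_rfl, fun _ _ => rfl⟩
  le_trans _ _ _ hst htu :=
    ⟨hst.1.trans htu.1, fun β hβ => (hst.2 β hβ).trans (htu.2 β (hβ.trans_le hst.1))⟩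
  le_antisymm s t hst hts := by
    have hlen : s.len = t.len := hst.1.antisymm hts.1
    refine PNode.ext hlen fun β => ?_
    by_cases hβ : β < s.len
    · exact hst.2 β hβ
    · rw [s.zero_above β (not_lt.1 hβ), t.zero_above β (hlen ▸ not_lt.1 hβ)]

theorem restrict_congr {s t : PNode} (h : s ≤ t) {α : Ordinal} (hα : α ≤ s.len) :
    t.restrict α = s.restrict α := by
  have hmin : ∀ u : PNode, α ≤ u.len → min α u.len = α := fun _ => min_eq_left
  refine PNode.ext ((hmin t (hα.trans h.1)).trans (hmin s hα).symm) fun β => ?_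
  change (if β < min α t.len then t.val β else 0) = if β < min α s.len then s.val β else 0
  rw [hmin t (hα.trans h.1), hmin s hα]
  split_ifs with hβ
  · exact (h.2 β (hβ.trans_le hα)).symm
  · rfl

theorem restrict_len (t : PNode) : t.restrict t.len = t := by
  refine PNode.ext (min_self _) fun β => ?_
  change (if β < min t.len t.len then t.val β else 0) = t.val β
  rw [min_self]
  split_ifs with hβ
  · rfl
  · exact (t.zero_above β (not_lt.1 hβ)).symm

theorem isLowerSet_of_restrict_mem {S : Set PNode} (hS : ∀ t ∈ S, ∀ α, t.restrict α ∈ S) :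
    IsLowerSet S := fun t s hst ht => by
  simpa only [restrict_congr hst le_rfl, restrict_len] using hS t ht s.len

noncomputable def chainSup {ι : Type*} [Small.{0} ι] (c : ι → PNode) : PNode where
  len := ⨆ j, (c j).len
  val β := ⨆ j, (c j).val β
  zero_above β h := nonpos_iff_eq_zero.1 <| Ordinal.iSup_le fun j =>
    ((c j).zero_above β ((Ordinal.le_iSup (fun j => (c j).len) j).trans h)).le

variable {ι : Type*} [LinearOrder ι] [Small.{0} ι] {c : ι → PNode}

theorem le_chainSup (hc : Monotone c) (j : ι) : c j ≤ chainSup c := by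
  refine ⟨Ordinal.le_iSup (fun j => (c j).len) j, fun β hβ => ?_⟩
  refine le_antisymm (Ordinal.le_iSup (fun j => (c j).val β) j) (Ordinal.iSup_le fun k => ?_)
  rcases le_total j k with hjk | hkj
  · exact ((hc hjk).2 β hβ).ge
  · by_cases hβk : β < (c k).len
    · exact ((hc hkj).2 β hβk).le
    · rw [(c k).zero_above β (not_lt.1 hβk)]
      exact zero_le

theorem restrict_chainSup_mem {S : Set PNode} (hS : ∀ t ∈ S, ∀ α, t.restrict α ∈ S)
    (hc : Monotone c) (hcS : ∀ j, c j ∈ S) {β : Ordinal} (hβ : β < (chainSup c).len) :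
    (chainSup c).restrict β ∈ S := by
  obtain ⟨j, hj⟩ := Ordinal.lt_iSup_iff.1 hβ
  rw [restrict_congr (le_chainSup hc j) hj.le]
  exact hS _ (hcS j) β

end PNode

theorem NoShortBranch.exists_upperBound {T : Set PNode} {δ i : Ordinal}
    (hT : NoShortBranch T δ) (hrestrict : ∀ t ∈ T, ∀ α, t.restrict α ∈ T)
    (hi : i.card < δ.cof) {c : Iio i → PNode} (hc : Monotone c) (hcT : ∀ j, c j ∈ T)
    (hlen : ∀ j, (c j).len < δ) : ∃ u ∈ T, ∀ j, c j ≤ u := by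
  have hsup : (PNode.chainSup c).len < δ := Ordinal.lift_iSup_lt_of_lt_cof
    (by simpa [← Ordinal.lift_cof, ← Ordinal.lift_card] using hi) hlen
  obtain ⟨u, hu, hcu, -⟩ :=
    hT _ hsup fun β hβ => PNode.restrict_chainSup_mem hrestrict hc hcT hβ
  exact ⟨u, hu, fun j => (PNode.le_chainSup hc j).trans hcu⟩

section Escape

variable (T : Set PNode) (𝒜 : Ordinal → Set PNode) (ζ : Ordinal) (tbar : PNode)

def entryIndices (t : PNode) : Set Ordinal :=
  {ξ | ξ < ζ ∧ ∃ s ∈ T, t < s ∧ s ∈ 𝒜 ξ}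

noncomputable def entryIndex (t : PNode) : Ordinal :=
  sInf (entryIndices T 𝒜 ζ t)

noncomputable def entryNode (t : PNode) : PNode :=
  Classical.epsilon fun s => s ∈ T ∧ t < s ∧ s ∈ 𝒜 (entryIndex T 𝒜 ζ t)

noncomputable def exitNode (t : PNode) : PNode :=
  Classical.epsilon fun u =>
    u ∈ T ∧ entryNode T 𝒜 ζ t ≤ u ∧ u ∉ 𝒜 (entryIndex T 𝒜 ζ t)

structure EscapeHyp : Prop where
  isLowerSet : ∀ ξ < ζ, IsLowerSet (𝒜 ξ)
  enter : ∀ t ∈ T, tbar ≤ t → (entryIndices T 𝒜 ζ t).Nonempty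
  leave : ∀ t ∈ T, tbar ≤ t → ∀ ξ < ζ, ∃ s ∈ T, t ≤ s ∧ s ∉ 𝒜 ξ

structure IsBaseNode (f : Ordinal → PNode) (i : Ordinal) (t : PNode) : Prop where
  mem : t ∈ T
  ge_tbar : tbar ≤ t
  exitNode_le : ∀ j < i, exitNode T 𝒜 ζ (f j) ≤ t

variable {T 𝒜 ζ tbar}

theorem IsBaseNode.congr {f g : Ordinal → PNode} {i : Ordinal} {t : PNode}
    (hfg : ∀ j < i, f j = g j) (h : IsBaseNode T 𝒜 ζ tbar f i t) :
    IsBaseNode T 𝒜 ζ tbar g i t :=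
  ⟨h.mem, h.ge_tbar, fun j hj => hfg j hj ▸ h.exitNode_le j hj⟩

theorem entryIndex_le {t : PNode} {ξ : Ordinal} (h : ξ ∈ entryIndices T 𝒜 ζ t) :
    entryIndex T 𝒜 ζ t ≤ ξ :=
  csInf_le' h

namespace EscapeHyp

variable {t : PNode}

theorem entryNode_spec (h : EscapeHyp T 𝒜 ζ tbar) (ht : t ∈ T) (htbar : tbar ≤ t) :
    entryIndex T 𝒜 ζ t < ζ ∧ entryNode T 𝒜 ζ t ∈ T ∧ t < entryNode T 𝒜 ζ t ∧
      entryNode T 𝒜 ζ t ∈ 𝒜 (entryIndex T 𝒜 ζ t) := by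
  obtain ⟨hlt, hex⟩ : entryIndex T 𝒜 ζ t ∈ entryIndices T 𝒜 ζ t :=
    csInf_mem (h.enter t ht htbar)
  exact ⟨hlt, Classical.epsilon_spec hex⟩

theorem exitNode_spec (h : EscapeHyp T 𝒜 ζ tbar) (ht : t ∈ T) (htbar : tbar ≤ t) :
    exitNode T 𝒜 ζ t ∈ T ∧ entryNode T 𝒜 ζ t ≤ exitNode T 𝒜 ζ t ∧
      exitNode T 𝒜 ζ t ∉ 𝒜 (entryIndex T 𝒜 ζ t) := by
  obtain ⟨hlt, hsT, hts, -⟩ := h.entryNode_spec ht htbar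
  exact Classical.epsilon_spec (h.leave _ hsT (htbar.trans hts.le) _ hlt)

theorem lt_exitNode (h : EscapeHyp T 𝒜 ζ tbar) (ht : t ∈ T) (htbar : tbar ≤ t) :
    t < exitNode T 𝒜 ζ t :=
  (h.entryNode_spec ht htbar).2.2.1.trans_le (h.exitNode_spec ht htbar).2.1

theorem not_mem_of_exitNode_le (h : EscapeHyp T 𝒜 ζ tbar) (ht : t ∈ T) (htbar : tbar ≤ t)
    {u : PNode} (hu : exitNode T 𝒜 ζ t ≤ u) : u ∉ 𝒜 (entryIndex T 𝒜 ζ t) := fun huA =>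
  (h.exitNode_spec ht htbar).2.2 <| h.isLowerSet _ (h.entryNode_spec ht htbar).1 hu huA

variable {f : Ordinal → PNode} {i j : Ordinal}

theorem exitNode_mono (h : EscapeHyp T 𝒜 ζ tbar) (hj : IsBaseNode T 𝒜 ζ tbar f j (f j))
    (hij : i ≤ j) : exitNode T 𝒜 ζ (f i) ≤ exitNode T 𝒜 ζ (f j) := by
  rcases hij.lt_or_eq with hij | rfl
  · exact (hj.exitNode_le i hij).trans (h.lt_exitNode hj.mem hj.ge_tbar).le
  · exact le_rfl

theorem entryNode_lt_entryNode (h : EscapeHyp T 𝒜 ζ tbar)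
    (hi : IsBaseNode T 𝒜 ζ tbar f i (f i)) (hj : IsBaseNode T 𝒜 ζ tbar f j (f j))
    (hij : i < j) : entryNode T 𝒜 ζ (f i) < entryNode T 𝒜 ζ (f j) :=
  ((h.exitNode_spec hi.mem hi.ge_tbar).2.1.trans (hj.exitNode_le i hij)).trans_lt
    (h.entryNode_spec hj.mem hj.ge_tbar).2.2.1

theorem entryIndex_lt_entryIndex (h : EscapeHyp T 𝒜 ζ tbar)
    (hi : IsBaseNode T 𝒜 ζ tbar f i (f i)) (hj : IsBaseNode T 𝒜 ζ tbar f j (f j))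
    (hij : i < j) : entryIndex T 𝒜 ζ (f i) < entryIndex T 𝒜 ζ (f j) := by
  obtain ⟨hlt, hsT, hfs, hsA⟩ := h.entryNode_spec hj.mem hj.ge_tbar
  have hexit : exitNode T 𝒜 ζ (f i) ≤ entryNode T 𝒜 ζ (f j) :=
    (hj.exitNode_le i hij).trans hfs.le
  have hle : entryIndex T 𝒜 ζ (f i) ≤ entryIndex T 𝒜 ζ (f j) :=
    entryIndex_le ⟨hlt, _, hsT, (h.lt_exitNode hi.mem hi.ge_tbar).trans_le hexit, hsA⟩
  exact hle.lt_of_ne fun heq => h.not_mem_of_exitNode_le hi.mem hi.ge_tbar hexit (heq ▸ hsA)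

theorem exists_isBaseNode (h : EscapeHyp T 𝒜 ζ tbar) {δ : Ordinal} (hT : NoShortBranch T δ)
    (hrestrict : ∀ t ∈ T, ∀ α, t.restrict α ∈ T) (hlen : ∀ t ∈ T, t.len < δ)
    (htbar : tbar ∈ T) (hi : i.card < δ.cof)
    (hf : ∀ j < i, IsBaseNode T 𝒜 ζ tbar f j (f j)) :
    ∃ t, IsBaseNode T 𝒜 ζ tbar f i t := by
  rcases eq_or_ne i 0 with rfl | hi0
  · exact ⟨tbar, htbar, le_rfl, fun j hj => (not_lt_zero hj).elim⟩
  have hexitT : ∀ j : Iio i, exitNode T 𝒜 ζ (f j) ∈ T := fun j =>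
    (h.exitNode_spec (hf j j.2).mem (hf j j.2).ge_tbar).1
  obtain ⟨u, hu, hexit_le⟩ := hT.exists_upperBound hrestrict hi
    (c := fun j : Iio i => exitNode T 𝒜 ζ (f j))
    (fun j k hjk => h.exitNode_mono (hf k k.2) hjk) hexitT
    (fun j => hlen _ (hexitT j))
  have h0 : 0 < i := pos_iff_ne_zero.2 hi0
  refine ⟨u, hu, ?_, fun j hj => hexit_le ⟨j, hj⟩⟩
  exact (hf 0 h0).ge_tbar.trans ((h.lt_exitNode (hf 0 h0).mem (hf 0 h0).ge_tbar).le.trans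
    (hexit_le ⟨0, h0⟩))

theorem not_mem_of_ge (h : EscapeHyp T 𝒜 ζ tbar)
    (hf : ∀ i ≤ ζ, IsBaseNode T 𝒜 ζ tbar f i (f i)) {u : PNode} (hu : u ∈ T) (hfu : f ζ ≤ u)
    {ξ : Ordinal} (hξ : ξ < ζ) : u ∉ 𝒜 ξ := by
  intro huA
  have hfξ := hf ξ hξ.le
  have hexit : exitNode T 𝒜 ζ (f ξ) ≤ u := ((hf ζ le_rfl).exitNode_le ξ hξ).trans hfu
  have hmono : StrictMonoOn (fun i => entryIndex T 𝒜 ζ (f i)) (Iic ζ) :=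
    fun i hi j hj hij => h.entryIndex_lt_entryIndex (hf i hi) (hf j hj) hij
  have hle : entryIndex T 𝒜 ζ (f ξ) ≤ ξ :=
    entryIndex_le ⟨hξ, u, hu, (h.lt_exitNode hfξ.mem hfξ.ge_tbar).trans_le hexit, huA⟩
  have heq : entryIndex T 𝒜 ζ (f ξ) = ξ := hle.antisymm (hmono.le_apply_of_Iic hξ.le)
  exact h.not_mem_of_exitNode_le hfξ.mem hfξ.ge_tbar hexit (by rwa [heq])

end EscapeHyp

end Escape

theorem escape_subtrees_general
    (lam : Cardinal.{0}) (hlamreg : lam.IsRegular)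
    (κ : Ordinal.{0} → Cardinal.{0})
    (T : Set PNode) (hT : IsTree T)
    (hTsub : ∀ t ∈ T, t.len < lam.ord ∧ InProd κ t)
    (hclosed : NoShortBranch T lam.ord)
    (ζ : Ordinal.{0}) (hζ : ζ < lam.ord)
    (𝒜 : Ordinal → Set PNode)
    (hsub : ∀ ξ < ζ, 𝒜 ξ ⊆ T ∧ ∀ t ∈ 𝒜 ξ, ∀ α, t.restrict α ∈ 𝒜 ξ)
    (tbar : PNode) (htbar : tbar ∈ T)
    (hnotcontained : ∀ t ∈ T, tbar.le t → ∀ ξ < ζ, ∃ s ∈ T, t.le s ∧ s ∉ 𝒜 ξ)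
    (hinto : ∀ t ∈ T, tbar.le t → ∃ ξ < ζ, ∃ s ∈ T, t.le s ∧ t ≠ s ∧ s ∈ 𝒜 ξ) :
    ∃ (s : Ordinal → PNode) (ξf : Ordinal → Ordinal),
      (∀ i < ζ, s i ∈ T ∧ tbar.le (s i)) ∧
      (∀ i j : Ordinal, i < j → j < ζ → (s i).le (s j) ∧ s i ≠ s j) ∧
      (∀ i < ζ, ξf i < ζ ∧ s i ∈ 𝒜 (ξf i) ∧ ∀ j < i, s i ∉ 𝒜 (ξf j)) ∧
      ∃ sbar ∈ T, (∀ i < ζ, (s i).le sbar) ∧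
        ∀ t ∈ T, sbar.le t → ∀ ξ < ζ, t ∉ 𝒜 ξ := by
  have h : EscapeHyp T 𝒜 ζ tbar := by
    refine ⟨fun ξ hξ => PNode.isLowerSet_of_restrict_mem (hsub ξ hξ).2, fun t ht htbar => ?_,
      hnotcontained⟩
    obtain ⟨ξ, hξ, s, hs, hts, hne, hsA⟩ := hinto t ht htbar
    exact ⟨ξ, hξ, s, hs, lt_of_le_of_ne hts hne, hsA⟩
  obtain ⟨f, hf⟩ := exists_seq_of_forall_exists (IsBaseNode T 𝒜 ζ tbar)
    (fun _ _ _ _ => IsBaseNode.congr) ζ fun f i hi hprev =>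
      h.exists_isBaseNode hclosed hT.2 (fun t ht => (hTsub t ht).1) htbar
        (by rw [hlamreg.cof_ord]; exact Cardinal.lt_ord.1 (hi.trans_lt hζ)) hprev
  refine ⟨fun i => entryNode T 𝒜 ζ (f i), fun i => entryIndex T 𝒜 ζ (f i), fun i hi => ?_,
    fun i j hij hj => ?_, fun i hi => ?_, f ζ, (hf ζ le_rfl).mem, fun i hi => ?_,
    fun t ht hft ξ hξ => h.not_mem_of_ge hf ht hft hξ⟩
  · obtain ⟨-, hsT, hfs, -⟩ := h.entryNode_spec (hf i hi.le).mem (hf i hi.le).ge_tbar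
    exact ⟨hsT, (hf i hi.le).ge_tbar.trans hfs.le⟩
  · have hlt := h.entryNode_lt_entryNode (hf i (hij.trans hj).le) (hf j hj.le) hij
    exact ⟨hlt.le, hlt.ne⟩
  · obtain ⟨hlt, -, hfs, hsA⟩ := h.entryNode_spec (hf i hi.le).mem (hf i hi.le).ge_tbar
    refine ⟨hlt, hsA, fun j hj => ?_⟩
    have hfj := hf j (hj.trans hi).le
    exact h.not_mem_of_exitNode_le hfj.mem hfj.ge_tbar
      (((hf i hi.le).exitNode_le j hj).trans hfs.le)
  · exact (h.exitNode_spec (hf i hi.le).mem (hf i hi.le).ge_tbar).2.1.trans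
      ((hf ζ le_rfl).exitNode_le i hi)

/-- **Escaping a short family of subtrees.** Let `T` be a tree of height `λ` (regular
uncountable) in `Π_{α<λ} κ α` with no short branches, and `⟨𝒜 ξ : ξ < ζ⟩` (`ζ < λ`)
subtrees of `T`. Suppose for some `t̄ ∈ T`: for every `t ⊒ t̄` in `T` and every
`ξ < ζ`, `T↾t` is not contained in `𝒜 ξ`; above every `t ⊒ t̄` there is a proper
extension lying in some `𝒜 ξ`; and above every `t ⊒ t̄`, for each `ξ`, there is a
proper extension outside `𝒜 ξ`. Then there is a strictly `⊑`-increasing sequence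
`⟨s i : i < ζ⟩` in `T` with each `s i` in some `𝒜 (ξf i)` but outside `𝒜 (ξf j)`
for all `j < i`; consequently its union `s̄ ∈ T` satisfies that no `t ⊒ s̄` in `T`
lies in any `𝒜 ξ`, `ξ < ζ`. -/
theorem escape_subtrees
    (lam : Cardinal.{0}) (hlamreg : lam.IsRegular) (hunc : Cardinal.aleph0 < lam)
    (κ : Ordinal.{0} → Cardinal.{0})
    (T : Set PNode) (hT : IsTree T)
    (hTsub : ∀ t ∈ T, t.len < lam.ord ∧ InProd κ t)
    (hclosed : NoShortBranch T lam.ord)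
    (ζ : Ordinal.{0}) (hζ : ζ < lam.ord) (hζ0 : ζ ≠ 0)
    (𝒜 : Ordinal → Set PNode)
    (hsub : ∀ ξ < ζ, 𝒜 ξ ⊆ T ∧ ∀ t ∈ 𝒜 ξ, ∀ α, t.restrict α ∈ 𝒜 ξ)
    (tbar : PNode) (htbar : tbar ∈ T)
    (hnotcontained : ∀ t ∈ T, tbar.le t → ∀ ξ < ζ, ∃ s ∈ T, t.le s ∧ s ∉ 𝒜 ξ)
    (hinto : ∀ t ∈ T, tbar.le t → ∃ ξ < ζ, ∃ s ∈ T, t.le s ∧ t ≠ s ∧ s ∈ 𝒜 ξ)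
    (havoid : ∀ t ∈ T, tbar.le t → ∀ ξ < ζ, ∃ s ∈ T, t.le s ∧ t ≠ s ∧ s ∉ 𝒜 ξ) :
    ∃ (s : Ordinal → PNode) (ξf : Ordinal → Ordinal),
      (∀ i < ζ, s i ∈ T ∧ tbar.le (s i)) ∧
      (∀ i j : Ordinal, i < j → j < ζ → (s i).le (s j) ∧ s i ≠ s j) ∧
      (∀ i < ζ, ξf i < ζ ∧ s i ∈ 𝒜 (ξf i) ∧ ∀ j < i, s i ∉ 𝒜 (ξf j)) ∧
      ∃ sbar ∈ T, (∀ i < ζ, (s i).le sbar) ∧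
        ∀ t ∈ T, sbar.le t → ∀ ξ < ζ, t ∉ 𝒜 ξ :=
  escape_subtrees_general lam hlamreg κ T hT hTsub hclosed ζ hζ 𝒜 hsub tbar htbar hnotcontained
    hinto
end
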